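/- For positive integers n, p, k with 1 ≤ k ≤ n and 1 ≤ p ≤ n, B(n,p,k) = Σ_{i=0}^{n-k} [ C(k-1+i, n-p)·C(p, n-k-i)·C(n-p, i) + C(k-1+i, p)·C(n-p, n-k-i)·C(p, i) ], where B(n,p,k) = (n/k)·Σ_{r≥0} C(p,r)·C(n-p,r)·C(n-r-1,k-r-1). In particular B(n,p,k) is a nonnegative integer. -/

import Mathlib

open Finset

/-- Binomial coefficient `C(a,b)` for integers, with `C(a,b) = 0` unless `0 ≤ b ≤ a`. -/
def C (a b : ℤ) : ℚ := if 0 ≤ b ∧ b ≤ a then (Nat.choose a.toNat b.toNat : ℚ) else 0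

/-- `B(n,p,k) = (n/k) · Σ_{r≥0} C(p,r)·C(n-p,r)·C(n-r-1,k-r-1)`. -/
def B (n p k : ℕ) : ℚ :=
  ((n : ℚ) / k) * ∑ r ∈ range (n + 1),
    C p r * C ((n : ℤ) - p) r * C ((n : ℤ) - r - 1) ((k : ℤ) - r - 1)

/-!
Write `n = p + q`. Then `B(n,p,k) = (n/k)·bSum p q k`, where `bSum` is the natural-number sum
in the definition of `B`, and the right-hand side is `singleSum p q k + singleSum q p k`, where
`singleSum p q k` is the paper's single sum. The single-sum formula
`p·bSum p q k = k·singleSum p q k` holds because both sides equal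
`k·Σ_s C(k-1,s)·C(q,s)·C(p+s,k)`: on the left by Vandermonde's convolution, trinomial revision
`C(q,s)·C(s,r) = C(q,r)·C(q-r,s-r)` and exchanging a triangular double sum, on the right by
Vandermonde applied to `C(k-1+i, q)`. As `bSum` is symmetric in `p` and `q`, adding the formula
for `(p,q)` and for `(q,p)` gives `n·bSum p q k = k·(singleSum p q k + singleSum q p k)`.
-/

theorem Nat.add_choose_eq_sum_range (m n k : ℕ) :
    (m + n).choose k = ∑ j ∈ range (k + 1), m.choose j * n.choose (k - j) := by
  rw [Nat.add_choose_eq, Finset.Nat.sum_antidiagonal_eq_sum_range_succ_mk]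

theorem Nat.sum_range_choose_mul_choose (m n : ℕ) :
    ∑ j ∈ range (n + 1), m.choose j * n.choose j = (m + n).choose n := by
  rw [Nat.add_choose_eq_sum_range]
  refine sum_congr rfl fun j hj => ?_
  rw [Nat.choose_symm (Nat.lt_succ_iff.mp (mem_range.mp hj))]

theorem Nat.choose_mul_choose_add_sub (p q r m : ℕ) :
    q.choose r * (p + q - r).choose m = q.choose r * (q - r + p).choose m := by
  rcases le_or_gt r q with h | h
  · rw [show p + q - r = q - r + p by omega]
  · simp [Nat.choose_eq_zero_of_lt h]

theorem Nat.sum_range_choose_mul_choose_mul_choose {p q m : ℕ} (b : ℕ) (hm : m ≤ p + q) :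
    ∑ i ∈ range (m + 1), q.choose i * i.choose b * p.choose (m - i)
      = q.choose b * (p + q - b).choose (p + q - m) := by
  rcases le_or_gt b m with hbm | hmb
  · rw [← sum_range_add_sum_Ico _ (by omega : b ≤ m + 1),
      sum_eq_zero fun i hi => by simp [Nat.choose_eq_zero_of_lt (mem_range.mp hi)], zero_add,
      sum_Ico_eq_sum_range, show m + 1 - b = m - b + 1 by omega,
      ← Nat.choose_symm_of_eq_add (by omega : p + q - b = m - b + (p + q - m)),
      Nat.choose_mul_choose_add_sub, Nat.add_choose_eq_sum_range, mul_sum]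
    refine sum_congr rfl fun t _ => ?_
    rw [Nat.choose_mul (Nat.le_add_right b t), Nat.add_sub_cancel_left,
      show m - (b + t) = m - b - t by omega, mul_assoc]
  · rw [sum_eq_zero fun i hi => by
      simp [Nat.choose_eq_zero_of_lt ((mem_range.mp hi).trans_le hmb)]]
    rcases le_or_gt b q with hbq | hqb
    · rw [Nat.choose_eq_zero_of_lt (by omega : p + q - b < p + q - m), mul_zero]
    · rw [Nat.choose_eq_zero_of_lt hqb, zero_mul]

theorem Finset.sum_range_eq_sum_range_of_eq_zero {M : Type*} [AddCommMonoid M] {f : ℕ → M}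
    {a b : ℕ} (hf : ∀ j, min a b ≤ j → f j = 0) :
    ∑ j ∈ range a, f j = ∑ j ∈ range b, f j := by
  suffices h : ∀ c, min a b ≤ c → ∑ j ∈ range (min a b), f j = ∑ j ∈ range c, f j by
    rw [← h a (min_le_left a b), ← h b (min_le_right a b)]
  exact fun c hc => sum_subset (range_subset_range.mpr hc) fun j _ hj =>
    hf j (not_lt.mp (mem_range.not.mp hj))

theorem Nat.succ_mul_choose_mul_choose (p k s : ℕ) (hs : s ≤ k) :
    (p + 1) * (p.choose (k - s) * (p + 1 + s).choose s)
      = (k + 1) * (k.choose s * (p + 1 + s).choose (k + 1)) := by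
  have h1 : (p + 1) * p.choose (k - s) = (p + 1).choose (k + 1 - s) * (k + 1 - s) := by
    rw [Nat.add_one_mul_choose_eq, show k - s + 1 = k + 1 - s by omega]
  have h2 : (p + 1 + s).choose s * (p + 1).choose (k + 1 - s)
      = (p + 1 + s).choose (k + 1) * (k + 1).choose s := by
    rw [Nat.choose_mul (by omega : s ≤ k + 1), show p + 1 + s - s = p + 1 by omega]
  calc (p + 1) * (p.choose (k - s) * (p + 1 + s).choose s)
      = (k + 1 - s) * ((p + 1 + s).choose s * (p + 1).choose (k + 1 - s)) := by
        rw [← mul_assoc, h1]; ring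
    _ = (k.choose s * (k + 1)) * (p + 1 + s).choose (k + 1) := by
        rw [h2, Nat.choose_mul_succ_eq]; ring
    _ = (k + 1) * (k.choose s * (p + 1 + s).choose (k + 1)) := by ring

def bSum (p q k : ℕ) : ℕ :=
  ∑ r ∈ range k, p.choose r * q.choose r * (p + q - 1 - r).choose (k - 1 - r)

def singleSum (p q k : ℕ) : ℕ :=
  ∑ i ∈ range (p + q - k + 1), (k - 1 + i).choose q * p.choose (p + q - k - i) * q.choose i

theorem bSum_comm (p q k : ℕ) : bSum p q k = bSum q p k := by
  simp only [bSum, add_comm p q, mul_comm (p.choose _)]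

theorem mul_bSum (p q k : ℕ) :
    p * bSum p q k = k * ∑ s ∈ range k, (k - 1).choose s * q.choose s * (p + s).choose k := by
  rcases p with _ | p
  · rw [zero_mul, eq_comm, mul_eq_zero]
    exact Or.inr (sum_eq_zero fun s hs => by
      simp [Nat.choose_eq_zero_of_lt (mem_range.mp hs)])
  rcases k with _ | k
  · simp [bSum]
  have hvandermonde : ∀ r ∈ range (k + 1),
      (p + 1).choose r * q.choose r * (p + 1 + q - 1 - r).choose (k + 1 - 1 - r)
        = ∑ j ∈ range (k + 1 - r),
          (p + 1).choose r * (q.choose r * (q - r).choose j * p.choose (k - r - j)) := by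
    intro r hr
    have hrk : r < k + 1 := mem_range.mp hr
    rw [show p + 1 + q - 1 - r = p + q - r by omega, show k + 1 - 1 - r = k - r by omega,
      mul_assoc, Nat.choose_mul_choose_add_sub, Nat.add_choose_eq_sum_range (q - r) p,
      show k - r + 1 = k + 1 - r by omega, mul_sum, mul_sum]
    simp only [mul_assoc]
  have hinner : ∀ s ∈ range (k + 1),
      ∑ r ∈ range (s + 1),
          (p + 1).choose r * (q.choose r * (q - r).choose (s - r) * p.choose (k - r - (s - r)))
        = q.choose s * p.choose (k - s) * (p + 1 + s).choose s := by
    intro s hs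
    rw [← Nat.sum_range_choose_mul_choose, mul_sum]
    refine sum_congr rfl fun r hr => ?_
    have hrs : r ≤ s := Nat.lt_succ_iff.mp (mem_range.mp hr)
    rw [← Nat.choose_mul hrs, show k - r - (s - r) = k - s by omega]
    ring
  calc (p + 1) * bSum (p + 1) q (k + 1)
      = (p + 1) * ∑ r ∈ range (k + 1), ∑ j ∈ range (k + 1 - r),
          (p + 1).choose r * (q.choose r * (q - r).choose j * p.choose (k - r - j)) := by
        rw [bSum, sum_congr rfl hvandermonde]
    _ = (p + 1) * ∑ s ∈ range (k + 1),
          q.choose s * p.choose (k - s) * (p + 1 + s).choose s := by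
        rw [← sum_range_diag_flip, sum_congr rfl hinner]
    _ = (k + 1) * ∑ s ∈ range (k + 1),
          (k + 1 - 1).choose s * q.choose s * (p + 1 + s).choose (k + 1) := by
        rw [mul_sum, mul_sum]
        refine sum_congr rfl fun s hs => ?_
        rw [Nat.add_sub_cancel]
        linear_combination (q.choose s) *
          Nat.succ_mul_choose_mul_choose p k s (Nat.lt_succ_iff.mp (mem_range.mp hs))

theorem singleSum_eq_sum (p q k : ℕ) (hk : 1 ≤ k) (hkn : k ≤ p + q) :
    singleSum p q k = ∑ s ∈ range k, (k - 1).choose s * q.choose s * (p + s).choose k := by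
  obtain ⟨k, rfl⟩ : ∃ k', k = k' + 1 := ⟨k - 1, by omega⟩
  obtain ⟨m, hm⟩ : ∃ m, p + q = m + (k + 1) := ⟨p + q - (k + 1), by omega⟩
  have hinner : ∀ j ∈ range (q + 1),
      ∑ i ∈ range (m + 1), q.choose i * i.choose (q - j) * p.choose (m - i)
        = q.choose j * (p + j).choose (k + 1) := by
    intro j hj
    have hjq : j ≤ q := Nat.lt_succ_iff.mp (mem_range.mp hj)
    rw [Nat.sum_range_choose_mul_choose_mul_choose _ (by omega), Nat.choose_symm hjq,
      show p + q - (q - j) = p + j by omega, show p + q - m = k + 1 by omega]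
  calc singleSum p q (k + 1)
      = ∑ i ∈ range (m + 1), ∑ j ∈ range (q + 1),
          k.choose j * (q.choose i * i.choose (q - j) * p.choose (m - i)) := by
        rw [singleSum, hm, Nat.add_sub_cancel, Nat.add_sub_cancel]
        refine sum_congr rfl fun i _ => ?_
        rw [Nat.add_choose_eq_sum_range k i, sum_mul, sum_mul]
        refine sum_congr rfl fun j _ => ?_
        ring
    _ = ∑ j ∈ range (q + 1), k.choose j * q.choose j * (p + j).choose (k + 1) := by
        rw [sum_comm]
        refine sum_congr rfl fun j hj => ?_
        rw [← mul_sum, hinner j hj, mul_assoc]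
    _ = ∑ s ∈ range (k + 1), (k + 1 - 1).choose s * q.choose s * (p + s).choose (k + 1) := by
        rw [Nat.add_sub_cancel]
        refine sum_range_eq_sum_range_of_eq_zero fun j hj => ?_
        rcases le_or_gt j q with hjq | hqj
        · simp [Nat.choose_eq_zero_of_lt (by omega : k < j)]
        · simp [Nat.choose_eq_zero_of_lt hqj]

theorem add_mul_bSum_eq (p q k : ℕ) (hk : 1 ≤ k) (hkn : k ≤ p + q) :
    (p + q) * bSum p q k = k * (singleSum p q k + singleSum q p k) := by
  rw [add_mul, mul_add, mul_bSum, singleSum_eq_sum p q k hk hkn, bSum_comm, mul_bSum,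
    singleSum_eq_sum q p k hk (by omega)]

theorem C_natCast (a b : ℕ) : C a b = a.choose b := by
  rw [C]
  split_ifs with h
  · simp
  · rw [Nat.choose_eq_zero_of_lt (by omega), Nat.cast_zero]

theorem C_of_neg (a : ℤ) {b : ℤ} (hb : b < 0) : C a b = 0 :=
  if_neg fun h => by omega

theorem B_add_eq_div_mul_bSum (p q k : ℕ) (hkn : k ≤ p + q) :
    B (p + q) p k = ((p + q : ℕ) : ℚ) / k * bSum p q k := by
  rw [B, bSum, Nat.cast_sum,
    ← sum_subset (range_subset_range.mpr (by omega : k ≤ p + q + 1)) fun r _ hr => by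
      rw [C_of_neg (b := (k : ℤ) - r - 1) _ (by simp at hr; omega), mul_zero]]
  refine congrArg _ (sum_congr rfl fun r hr => ?_)
  have hrk : r < k := mem_range.mp hr
  rw [show ((p + q : ℕ) : ℤ) - p = q by push_cast; ring,
    show ((p + q : ℕ) : ℤ) - r - 1 = (p + q - 1 - r : ℕ) by omega,
    show (k : ℤ) - r - 1 = (k - 1 - r : ℕ) by omega]
  simp only [C_natCast, Nat.cast_mul]

theorem stmt_15_general (n p k : ℕ) (hk : 1 ≤ k) (hkn : k ≤ n) (hpn : p ≤ n) :
    B n p k = (∑ i ∈ range (n - k + 1),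
      (C ((k : ℤ) - 1 + i) ((n : ℤ) - p) * C p ((n : ℤ) - k - i) * C ((n : ℤ) - p) i +
       C ((k : ℤ) - 1 + i) p * C ((n : ℤ) - p) ((n : ℤ) - k - i) * C p i)) ∧
    ∃ m : ℕ, B n p k = (m : ℚ) := by
  obtain ⟨q, rfl⟩ : ∃ q, n = p + q := ⟨n - p, by omega⟩
  have hB : B (p + q) p k = (singleSum p q k + singleSum q p k : ℕ) := by
    rw [B_add_eq_div_mul_bSum p q k hkn, div_mul_eq_mul_div, div_eq_iff (by positivity),
      ← Nat.cast_mul, add_mul_bSum_eq p q k hk hkn, Nat.cast_mul, mul_comm]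
  refine ⟨hB.trans ?_, _, hB⟩
  rw [singleSum, singleSum, add_comm q p, ← sum_add_distrib, Nat.cast_sum]
  refine sum_congr rfl fun i hi => ?_
  have hik : i < p + q - k + 1 := mem_range.mp hi
  rw [show (k : ℤ) - 1 + i = (k - 1 + i : ℕ) by omega,
    show ((p + q : ℕ) : ℤ) - p = q by push_cast; ring,
    show ((p + q : ℕ) : ℤ) - k - i = (p + q - k - i : ℕ) by omega]
  simp only [C_natCast]
  push_cast
  ring

theorem stmt_15 (n p k : ℕ) (hk : 1 ≤ k) (hkn : k ≤ n) (hp : 1 ≤ p) (hpn : p ≤ n) :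
    B n p k = (∑ i ∈ range (n - k + 1),
      (C ((k : ℤ) - 1 + i) ((n : ℤ) - p) * C p ((n : ℤ) - k - i) * C ((n : ℤ) - p) i +
       C ((k : ℤ) - 1 + i) p * C ((n : ℤ) - p) ((n : ℤ) - k - i) * C p i)) ∧
    ∃ m : ℕ, B n p k = (m : ℚ) :=
  stmt_15_general n p k hk hkn hpn
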